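/- Let 0 < r_1 < r_2 < ∞, and suppose m, S ∈ C¹([r_1, r_2)), with S > 0, and ω_j ∈ C²([r_1, r_2)) for j = 1, …, N−1 satisfy the su(N) EYM field equations on [r_1, r_2). Suppose there is a constant μ_min > 0 such that μ(r) = 1 − 2m(r)/r − Λr²/3 ≥ μ_min for all r ∈ [r_1, r_2). Then all field variables remain regular up to r_2: each of the functions m, S, ω_1, …, ω_{N−1} and ω_1′, …, ω_{N−1}′ is bounded on [r_1, r_2) and has a finite limit as r → r_2⁻ (with lim S > 0). -/

import Mathlib

/-!
Since `μ ≥ μ_min > 0`, `m′ = μG + r²p_θ ≥ 0`, and `μ ≥ μ_min` also bounds `m` from above, so `m`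
increases to a finite limit. By AM–GM, `|ω_j′| ≤ μ_min ω_j′² + 1/(4μ_min) ≤ m′ + 1/(4μ_min)`,
so the variation of `ω_j` is dominated by that of `m + r/(4μ_min)` and `ω_j` converges.
Once all `ω_j` are bounded, so are `p_θ`, `W_j` and the coefficients of the Yang–Mills
equations, while `r²μ ≥ r₁²μ_min`; hence `|ω_j″| ≤ K|ω_j′| + ε`, and Grönwall's inequality
bounds `ω_j′` and then `ω_j″`, so `ω_j′` converges. Finally `G` is bounded, so
`|S′| ≤ c|S|`: Grönwall bounds the increasing function `S`, whose limit is at least `S(r₁) > 0`.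
-/
open Filter Asymptotics Topology

noncomputable section

/-- μ(r) = 1 − 2m(r)/r − Λr²/3. -/
def muF (Λ : ℝ) (m : ℝ → ℝ) (r : ℝ) : ℝ := 1 - 2 * m r / r - Λ * r ^ 2 / 3

/-- G = Σ_{j=1}^{N−1} (ω_j′)². -/
def GF (N : ℕ) (ω : ℕ → ℝ → ℝ) (r : ℝ) : ℝ :=
  ∑ j ∈ Finset.Icc 1 (N - 1), deriv (ω j) r ^ 2

/-- p_θ evaluated on a set of gauge-field values `w`. -/
def pThetaVal (N : ℕ) (w : ℕ → ℝ) (r : ℝ) : ℝ :=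
  1 / (4 * r ^ 4) *
    ∑ j ∈ Finset.Icc 1 N, (w j ^ 2 - w (j - 1) ^ 2 - (N : ℝ) - 1 + 2 * (j : ℝ)) ^ 2

/-- p_θ = (1/4r⁴) Σ_{j=1}^{N} (ω_j² − ω_{j−1}² − N − 1 + 2j)². -/
def pTheta (N : ℕ) (ω : ℕ → ℝ → ℝ) (r : ℝ) : ℝ := pThetaVal N (fun j => ω j r) r

/-- W_j evaluated on gauge-field values `w`. -/
def WVal (w : ℕ → ℝ) (j : ℕ) : ℝ :=
  1 - w j ^ 2 + 1 / 2 * (w (j - 1) ^ 2 + w (j + 1) ^ 2)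

/-- W_j = 1 − ω_j² + (1/2)(ω_{j−1}² + ω_{j+1}²). -/
def WF (ω : ℕ → ℝ → ℝ) (j : ℕ) (r : ℝ) : ℝ := WVal (fun i => ω i r) j

/-- The static spherically symmetric su(N) EYM field equations at radius `r`:
m′ = μG + r²p_θ, S′ = S·(2G/r), and the N−1 Yang–Mills equations
r²μω_j″ + (2m − 2r³p_θ − (2Λ/3)r³)ω_j′ + W_jω_j = 0, with ω₀ ≡ 0, ω_N ≡ 0. -/
def EYM (N : ℕ) (Λ : ℝ) (m S : ℝ → ℝ) (ω : ℕ → ℝ → ℝ) (r : ℝ) : Prop :=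
  ω 0 r = 0 ∧ ω N r = 0 ∧
  HasDerivAt m (muF Λ m r * GF N ω r + r ^ 2 * pTheta N ω r) r ∧
  HasDerivAt S (S r * (2 * GF N ω r / r)) r ∧
  ∀ j ∈ Finset.Icc 1 (N - 1),
    DifferentiableAt ℝ (ω j) r ∧ DifferentiableAt ℝ (deriv (ω j)) r ∧
    r ^ 2 * muF Λ m r * deriv (deriv (ω j)) r
      + (2 * m r - 2 * r ^ 3 * pTheta N ω r - 2 * Λ * r ^ 3 / 3) * deriv (ω j) r
      + WF ω j r * ω j r = 0

/-- Boundary conditions at infinity: m → M, S → 1, ω_j → ω_{j,∞} as r → ∞. -/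
def BCInfinity (N : ℕ) (m S : ℝ → ℝ) (ω : ℕ → ℝ → ℝ) : Prop :=
  (∃ M : ℝ, Tendsto m atTop (𝓝 M)) ∧ Tendsto S atTop (𝓝 1) ∧
  ∀ j ∈ Finset.Icc 1 (N - 1), ∃ w : ℝ, Tendsto (ω j) atTop (𝓝 w)

/-- `f` has exactly `k` zeros in the set `s`. -/
def HasExactlyZeros (f : ℝ → ℝ) (s : Set ℝ) (k : ℕ) : Prop :=
  {r ∈ s | f r = 0}.Finite ∧ {r ∈ s | f r = 0}.ncard = k

open Set

section Calculus

variable {a b : ℝ} {f f' g g' : ℝ → ℝ}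

theorem Filter.boundedAtFilter_principal_iff {s : Set ℝ} :
    BoundedAtFilter (𝓟 s) f ↔ ∃ C, ∀ x ∈ s, |f x| ≤ C := by
  simp [BoundedAtFilter, isBigO_principal]

theorem Filter.BoundedAtFilter.isBounded_image {s : Set ℝ} (hf : BoundedAtFilter (𝓟 s) f) :
    Bornology.IsBounded (f '' s) := by
  obtain ⟨C, hC⟩ := boundedAtFilter_principal_iff.1 hf
  exact isBounded_iff_forall_norm_le.2 ⟨C, forall_mem_image.2 hC⟩

theorem boundedAtFilter_Ico_of_continuousOn (hf : ContinuousOn f (Icc a b)) :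
    BoundedAtFilter (𝓟 (Ico a b)) f :=
  (hf.isBigO_principal (c := (1 : ℝ)) isCompact_Icc (by simp)).mono
    (principal_mono.2 Ico_subset_Icc_self)

theorem monotoneOn_Ico_of_hasDerivAt_nonneg (hf : ∀ x ∈ Ico a b, HasDerivAt f (f' x) x)
    (hf' : ∀ x ∈ Ico a b, 0 ≤ f' x) : MonotoneOn f (Ico a b) := by
  refine monotoneOn_of_hasDerivWithinAt_nonneg (f' := f') (convex_Ico a b)
    (fun x hx => (hf x hx).continuousAt.continuousWithinAt) (fun x hx => ?_) (fun x hx => ?_) <;>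
    rw [interior_Ico] at hx
  · exact (hf x (Ioo_subset_Ico_self hx)).hasDerivWithinAt
  · exact hf' x (Ioo_subset_Ico_self hx)

theorem MonotoneOn.exists_tendsto_nhdsLT_of_Ico (hab : a < b) (hf : MonotoneOn f (Ico a b))
    {C : ℝ} (hC : ∀ x ∈ Ico a b, f x ≤ C) : ∃ L, Tendsto f (𝓝[<] b) (𝓝 L) :=
  ⟨_, (hf.mono Ioo_subset_Ico_self).tendsto_nhdsWithin_Ioo_left (nonempty_Ioo.2 hab)
    ⟨C, forall_mem_image.2 fun x hx => hC x (Ioo_subset_Ico_self hx)⟩⟩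

theorem boundedAtFilter_and_exists_tendsto_of_abs_deriv_le (hab : a < b)
    (hf : ∀ x ∈ Ico a b, HasDerivAt f (f' x) x) (hg : ∀ x ∈ Ico a b, HasDerivAt g (g' x) x)
    (hfg : ∀ x ∈ Ico a b, |f' x| ≤ g' x) {C : ℝ} (hC : ∀ x ∈ Ico a b, g x ≤ C) :
    BoundedAtFilter (𝓟 (Ico a b)) f ∧ ∃ L, Tendsto f (𝓝[<] b) (𝓝 L) := by
  have hg_mono : MonotoneOn g (Ico a b) :=
    monotoneOn_Ico_of_hasDerivAt_nonneg hg fun x hx => (abs_nonneg _).trans (hfg x hx)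
  have hadd : MonotoneOn (fun x => g x + f x) (Ico a b) :=
    monotoneOn_Ico_of_hasDerivAt_nonneg (fun x hx => (hg x hx).add (hf x hx))
      fun x hx => by linarith [neg_abs_le (f' x), hfg x hx]
  have hsub : MonotoneOn (fun x => g x - f x) (Ico a b) :=
    monotoneOn_Ico_of_hasDerivAt_nonneg (fun x hx => (hg x hx).sub (hf x hx))
      fun x hx => by linarith [le_abs_self (f' x), hfg x hx]
  have ha : a ∈ Ico a b := left_mem_Ico.2 hab
  have hbound : ∀ x ∈ Ico a b, |f x| ≤ |f a| + (C - g a) := fun x hx => by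
    have h₁ := hadd ha hx hx.1
    have h₂ := hsub ha hx hx.1
    rw [abs_le]
    constructor <;> linarith [hC x hx, neg_abs_le (f a), le_abs_self (f a)]
  refine ⟨boundedAtFilter_principal_iff.2 ⟨_, hbound⟩, ?_⟩
  obtain ⟨L₁, hL₁⟩ := hadd.exists_tendsto_nhdsLT_of_Ico hab (C := C + (|f a| + (C - g a)))
    fun x hx => by linarith [hC x hx, le_abs_self (f x), hbound x hx]
  obtain ⟨L₂, hL₂⟩ := hg_mono.exists_tendsto_nhdsLT_of_Ico hab hC
  exact ⟨L₁ - L₂, by simpa using hL₁.sub hL₂⟩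

theorem boundedAtFilter_of_abs_deriv_le_mul_abs_add {K ε : ℝ} (hK : 0 ≤ K) (hε : 0 ≤ ε)
    (hf : ∀ x ∈ Ico a b, HasDerivAt f (f' x) x)
    (bound : ∀ x ∈ Ico a b, |f' x| ≤ K * |f x| + ε) : BoundedAtFilter (𝓟 (Ico a b)) f := by
  refine boundedAtFilter_principal_iff.2 ⟨gronwallBound |f a| K ε (b - a), fun x hx => ?_⟩
  have hsub : Icc a x ⊆ Ico a b := Icc_subset_Ico_right hx.2
  have := norm_le_gronwallBound_of_norm_deriv_right_le (f := f) (f' := f')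
    (fun y hy => (hf y (hsub hy)).continuousAt.continuousWithinAt)
    (fun y hy => (hf y (hsub (Ico_subset_Icc_self hy))).hasDerivWithinAt) le_rfl
    (fun y hy => bound y (hsub (Ico_subset_Icc_self hy))) x (right_mem_Icc.2 hx.1)
  exact this.trans (gronwallBound_mono (abs_nonneg _) hε hK (by linarith [hx.2]))

theorem boundedAtFilter_and_exists_tendsto_of_abs_deriv_le_mul_abs_add (hab : a < b) {K ε : ℝ}
    (hK : 0 ≤ K) (hε : 0 ≤ ε) (hf : ∀ x ∈ Ico a b, HasDerivAt f (f' x) x)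
    (bound : ∀ x ∈ Ico a b, |f' x| ≤ K * |f x| + ε) :
    BoundedAtFilter (𝓟 (Ico a b)) f ∧ ∃ L, Tendsto f (𝓝[<] b) (𝓝 L) := by
  have hbdd := boundedAtFilter_of_abs_deriv_le_mul_abs_add hK hε hf bound
  obtain ⟨D, hD⟩ := boundedAtFilter_principal_iff.1 hbdd
  refine ⟨hbdd, (boundedAtFilter_and_exists_tendsto_of_abs_deriv_le hab hf
    (fun x _ => (hasDerivAt_id x).const_mul (K * D + ε)) (fun x hx => ?_)
    (C := (K * D + ε) * b) fun x hx => ?_).2⟩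
  · simpa using (bound x hx).trans (by gcongr; exact hD x hx)
  · have : 0 ≤ K * D + ε := add_nonneg (mul_nonneg hK ((abs_nonneg _).trans (hD x hx))) hε
    simpa using mul_le_mul_of_nonneg_left hx.2.le this

end Calculus

theorem abs_le_mul_sq_add_inv {c : ℝ} (hc : 0 < c) (x : ℝ) : |x| ≤ c * x ^ 2 + 1 / (4 * c) := by
  have key : c * x ^ 2 + 1 / (4 * c) - |x| = (2 * c * |x| - 1) ^ 2 / (4 * c) := by
    field_simp
    rw [← sq_abs x]
    ring
  linarith [show 0 ≤ (2 * c * |x| - 1) ^ 2 / (4 * c) by positivity]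

theorem abs_le_div_mul_abs_add_div {a₀ a b c y z B C : ℝ} (ha₀ : 0 < a₀) (ha : a₀ ≤ a)
    (h : a * z + b * y + c = 0) (hb : |b| ≤ B) (hc : |c| ≤ C) : |z| ≤ B / a₀ * |y| + C / a₀ := by
  rw [div_mul_eq_mul_div, ← add_div, le_div_iff₀ ha₀]
  calc |z| * a₀ ≤ |a * z| := by
        rw [abs_mul, abs_of_pos (ha₀.trans_le ha), mul_comm]; gcongr
    _ = |b * y + c| := by rw [show a * z = -(b * y + c) by linarith, abs_neg]
    _ ≤ |b| * |y| + |c| := (abs_add_le _ _).trans_eq (by rw [abs_mul])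
    _ ≤ B * |y| + C := by gcongr

section EYM

variable {N : ℕ} {Λ μmin r r₁ r₂ : ℝ} {m S : ℝ → ℝ} {ω : ℕ → ℝ → ℝ}

theorem GF_nonneg : 0 ≤ GF N ω r :=
  Finset.sum_nonneg fun _ _ => sq_nonneg _

theorem sq_deriv_le_GF {j : ℕ} (hj : j ∈ Finset.Icc 1 (N - 1)) :
    deriv (ω j) r ^ 2 ≤ GF N ω r :=
  Finset.single_le_sum (f := fun i => deriv (ω i) r ^ 2) (fun _ _ => sq_nonneg _) hj

theorem pTheta_nonneg : 0 ≤ pTheta N ω r :=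
  mul_nonneg (by positivity) (Finset.sum_nonneg fun _ _ => sq_nonneg _)

theorem two_mul_le_of_le_muF (hr : 0 < r) (hμ : μmin ≤ muF Λ m r) :
    2 * m r ≤ (1 - μmin) * r - Λ * r ^ 3 / 3 := by
  have h : 2 * m r / r ≤ 1 - μmin - Λ * r ^ 2 / 3 := by unfold muF at hμ; linarith
  have := (div_le_iff₀ hr).1 h
  linarith

theorem abs_deriv_le_of_le_muF (hμmin : 0 < μmin) (hμ : μmin ≤ muF Λ m r) {j : ℕ}
    (hj : j ∈ Finset.Icc 1 (N - 1)) :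
    |deriv (ω j) r| ≤ muF Λ m r * GF N ω r + r ^ 2 * pTheta N ω r + 1 / (4 * μmin) :=
  calc |deriv (ω j) r| ≤ μmin * deriv (ω j) r ^ 2 + 1 / (4 * μmin) :=
        abs_le_mul_sq_add_inv hμmin _
    _ ≤ muF Λ m r * GF N ω r + r ^ 2 * pTheta N ω r + 1 / (4 * μmin) := by
        gcongr ?_ + _
        nlinarith [sq_deriv_le_GF (ω := ω) (r := r) hj, GF_nonneg (N := N) (ω := ω) (r := r),
          pTheta_nonneg (N := N) (ω := ω) (r := r), sq_nonneg r]

theorem pTheta_boundedAtFilter (hr₁ : 0 < r₁)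
    (hω : ∀ i ≤ N, BoundedAtFilter (𝓟 (Ico r₁ r₂)) (ω i)) :
    BoundedAtFilter (𝓟 (Ico r₁ r₂)) (pTheta N ω) := by
  let B := boundedFilterSubalgebra ℝ (β := ℝ) (𝓟 (Ico r₁ r₂))
  have hinv : (fun r : ℝ => 1 / (4 * r ^ 4)) ∈ B :=
    boundedAtFilter_Ico_of_continuousOn <| ContinuousOn.div continuousOn_const (by fun_prop)
      fun r hr => by have := hr₁.trans_le hr.1; positivity
  have hterm : ∀ j ∈ Finset.Icc 1 N,
      (ω j ^ 2 - ω (j - 1) ^ 2 + fun _ => -(N : ℝ) - 1 + 2 * j) ^ 2 ∈ B := fun j hj =>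
    pow_mem (add_mem (sub_mem (pow_mem (hω j (Finset.mem_Icc.1 hj).2) 2)
      (pow_mem (hω (j - 1) (by have := Finset.mem_Icc.1 hj; omega)) 2))
      (const_boundedAtFilter _ _)) 2
  show pTheta N ω ∈ B
  convert mul_mem hinv (sum_mem hterm) using 1
  ext r
  simp only [pTheta, pThetaVal, Pi.mul_apply, Finset.sum_apply, Pi.pow_apply, Pi.add_apply,
    Pi.sub_apply]
  congr 1
  exact Finset.sum_congr rfl fun j _ => by ring

theorem WF_boundedAtFilter (hω : ∀ i ≤ N, BoundedAtFilter (𝓟 (Ico r₁ r₂)) (ω i)) {j : ℕ}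
    (hj : j ∈ Finset.Icc 1 (N - 1)) : BoundedAtFilter (𝓟 (Ico r₁ r₂)) (WF ω j) := by
  let B := boundedFilterSubalgebra ℝ (β := ℝ) (𝓟 (Ico r₁ r₂))
  have hsq : ∀ i ≤ N, ω i ^ 2 ∈ B := fun i hi => pow_mem (hω i hi) 2
  rw [Finset.mem_Icc] at hj
  show WF ω j ∈ B
  convert add_mem (sub_mem (one_mem B) (hsq j (by omega)))
    (mul_mem (const_boundedAtFilter _ (1 / 2 : ℝ))
      (add_mem (hsq (j - 1) (by omega)) (hsq (j + 1) (by omega)))) using 1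
  ext r
  simp [WF, WVal]

theorem exists_mass_le (hr₁ : 0 < r₁) (hμ : ∀ r ∈ Ico r₁ r₂, μmin ≤ muF Λ m r) :
    ∃ C, ∀ r ∈ Ico r₁ r₂, m r ≤ C := by
  obtain ⟨C, hC⟩ := boundedAtFilter_principal_iff.1 <|
    boundedAtFilter_Ico_of_continuousOn (a := r₁) (b := r₂)
      (f := fun r => ((1 - μmin) * r - Λ * r ^ 3 / 3) / 2) (by fun_prop)
  exact ⟨C, fun r hr => by
    linarith [two_mul_le_of_le_muF (hr₁.trans_le hr.1) (hμ r hr), le_abs_self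
      (((1 - μmin) * r - Λ * r ^ 3 / 3) / 2), hC r hr]⟩

theorem mass_boundedAtFilter_and_tendsto (hr₁ : 0 < r₁) (hr₁₂ : r₁ < r₂)
    (hsol : ∀ r ∈ Ico r₁ r₂, EYM N Λ m S ω r) (hμmin : 0 < μmin)
    (hμ : ∀ r ∈ Ico r₁ r₂, μmin ≤ muF Λ m r) :
    BoundedAtFilter (𝓟 (Ico r₁ r₂)) m ∧ ∃ m₂, Tendsto m (𝓝[<] r₂) (𝓝 m₂) := by
  obtain ⟨C, hC⟩ := exists_mass_le hr₁ hμ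
  have hm' := fun r hr => (hsol r hr).2.2.1
  refine boundedAtFilter_and_exists_tendsto_of_abs_deriv_le hr₁₂ hm' hm' (fun r hr => ?_) hC
  exact (abs_of_nonneg (add_nonneg (mul_nonneg (hμmin.le.trans (hμ r hr)) GF_nonneg)
    (mul_nonneg (sq_nonneg r) pTheta_nonneg))).le

theorem gauge_boundedAtFilter_and_tendsto (hr₁ : 0 < r₁) (hr₁₂ : r₁ < r₂)
    (hsol : ∀ r ∈ Ico r₁ r₂, EYM N Λ m S ω r) (hμmin : 0 < μmin)
    (hμ : ∀ r ∈ Ico r₁ r₂, μmin ≤ muF Λ m r) {j : ℕ} (hj : j ∈ Finset.Icc 1 (N - 1)) :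
    BoundedAtFilter (𝓟 (Ico r₁ r₂)) (ω j) ∧ ∃ a, Tendsto (ω j) (𝓝[<] r₂) (𝓝 a) := by
  obtain ⟨C, hC⟩ := exists_mass_le hr₁ hμ
  refine boundedAtFilter_and_exists_tendsto_of_abs_deriv_le hr₁₂
    (fun r hr => ((hsol r hr).2.2.2.2 j hj).1.hasDerivAt)
    (fun r hr => (hsol r hr).2.2.1.add ((hasDerivAt_id r).div_const (4 * μmin)))
    (fun r hr => abs_deriv_le_of_le_muF hμmin (hμ r hr) hj) (C := C + r₂ / (4 * μmin))
    fun r hr => ?_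
  have : r / (4 * μmin) ≤ r₂ / (4 * μmin) := by gcongr; exact hr.2.le
  show m r + r / (4 * μmin) ≤ _
  linarith [hC r hr]

theorem gauge_boundedAtFilter_of_le (hr₁ : 0 < r₁) (hr₁₂ : r₁ < r₂)
    (hsol : ∀ r ∈ Ico r₁ r₂, EYM N Λ m S ω r) (hμmin : 0 < μmin)
    (hμ : ∀ r ∈ Ico r₁ r₂, μmin ≤ muF Λ m r) {i : ℕ} (hi : i ≤ N) :
    BoundedAtFilter (𝓟 (Ico r₁ r₂)) (ω i) := by
  rcases Nat.eq_zero_or_pos i with rfl | hi₀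
  · exact boundedAtFilter_principal_iff.2 ⟨0, fun r hr => by simp [(hsol r hr).1]⟩
  rcases hi.eq_or_lt with rfl | hiN
  · exact boundedAtFilter_principal_iff.2 ⟨0, fun r hr => by simp [(hsol r hr).2.1]⟩
  exact (gauge_boundedAtFilter_and_tendsto hr₁ hr₁₂ hsol hμmin hμ
    (Finset.mem_Icc.2 ⟨hi₀, by omega⟩)).1

theorem GF_boundedAtFilter {s : Set ℝ}
    (hω' : ∀ j ∈ Finset.Icc 1 (N - 1), BoundedAtFilter (𝓟 s) (deriv (ω j))) :
    BoundedAtFilter (𝓟 s) (GF N ω) := by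
  let B := boundedFilterSubalgebra ℝ (β := ℝ) (𝓟 s)
  show GF N ω ∈ B
  have hsq : ∀ j ∈ Finset.Icc 1 (N - 1), deriv (ω j) ^ 2 ∈ B := fun j hj => pow_mem (hω' j hj) 2
  convert sum_mem hsq using 1
  ext r
  simp [GF]

theorem exists_abs_deriv_deriv_gauge_le (hr₁ : 0 < r₁) (hr₁₂ : r₁ < r₂)
    (hsol : ∀ r ∈ Ico r₁ r₂, EYM N Λ m S ω r) (hμmin : 0 < μmin)
    (hμ : ∀ r ∈ Ico r₁ r₂, μmin ≤ muF Λ m r) {j : ℕ} (hj : j ∈ Finset.Icc 1 (N - 1)) :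
    ∃ K ε, 0 ≤ K ∧ 0 ≤ ε ∧ ∀ r ∈ Ico r₁ r₂,
      |deriv (deriv (ω j)) r| ≤ K * |deriv (ω j) r| + ε := by
  have hω := fun i (hi : i ≤ N) => gauge_boundedAtFilter_of_le hr₁ hr₁₂ hsol hμmin hμ hi
  let B := boundedFilterSubalgebra ℝ (β := ℝ) (𝓟 (Ico r₁ r₂))
  have hcube : (fun r : ℝ => r ^ 3) ∈ B := boundedAtFilter_Ico_of_continuousOn (by fun_prop)
  have hcoeff : (fun r => 2 * m r - 2 * r ^ 3 * pTheta N ω r - 2 * Λ * r ^ 3 / 3) ∈ B := by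
    convert sub_mem (sub_mem (mul_mem (const_boundedAtFilter _ 2)
      (mass_boundedAtFilter_and_tendsto hr₁ hr₁₂ hsol hμmin hμ).1)
      (mul_mem (mul_mem (const_boundedAtFilter _ 2) hcube) (pTheta_boundedAtFilter hr₁ hω)))
      (mul_mem (const_boundedAtFilter _ (2 * Λ / 3)) hcube) using 1
    ext r
    simp only [Pi.sub_apply, Pi.mul_apply, Function.const_apply]
    ring
  obtain ⟨CA, hCA⟩ := boundedAtFilter_principal_iff.1 hcoeff
  obtain ⟨CW, hCW⟩ := boundedAtFilter_principal_iff.1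
    ((WF_boundedAtFilter hω hj).mul (hω j (by have := Finset.mem_Icc.1 hj; omega)))
  have hr₁I : r₁ ∈ Ico r₁ r₂ := left_mem_Ico.2 hr₁₂
  have ha₀ : 0 < r₁ ^ 2 * μmin := by positivity
  refine ⟨CA / (r₁ ^ 2 * μmin), CW / (r₁ ^ 2 * μmin),
    div_nonneg ((abs_nonneg _).trans (hCA r₁ hr₁I)) ha₀.le,
    div_nonneg ((abs_nonneg _).trans (hCW r₁ hr₁I)) ha₀.le, fun r hr => ?_⟩
  refine abs_le_div_mul_abs_add_div ha₀ ?_ ((hsol r hr).2.2.2.2 j hj).2.2 (hCA r hr) (hCW r hr)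
  exact mul_le_mul (pow_le_pow_left₀ hr₁.le hr.1 2) (hμ r hr) hμmin.le (sq_nonneg r)

theorem deriv_gauge_boundedAtFilter_and_tendsto (hr₁ : 0 < r₁) (hr₁₂ : r₁ < r₂)
    (hsol : ∀ r ∈ Ico r₁ r₂, EYM N Λ m S ω r) (hμmin : 0 < μmin)
    (hμ : ∀ r ∈ Ico r₁ r₂, μmin ≤ muF Λ m r) {j : ℕ} (hj : j ∈ Finset.Icc 1 (N - 1)) :
    BoundedAtFilter (𝓟 (Ico r₁ r₂)) (deriv (ω j)) ∧
      ∃ b, Tendsto (deriv (ω j)) (𝓝[<] r₂) (𝓝 b) := by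
  obtain ⟨K, ε, hK, hε, hbound⟩ := exists_abs_deriv_deriv_gauge_le hr₁ hr₁₂ hsol hμmin hμ hj
  exact boundedAtFilter_and_exists_tendsto_of_abs_deriv_le_mul_abs_add hr₁₂ hK hε
    (fun r hr => ((hsol r hr).2.2.2.2 j hj).2.1.hasDerivAt) hbound

theorem metric_boundedAtFilter_and_tendsto (hr₁ : 0 < r₁) (hr₁₂ : r₁ < r₂)
    (hSpos : ∀ r ∈ Ico r₁ r₂, 0 < S r) (hsol : ∀ r ∈ Ico r₁ r₂, EYM N Λ m S ω r)
    (hμmin : 0 < μmin) (hμ : ∀ r ∈ Ico r₁ r₂, μmin ≤ muF Λ m r) :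
    BoundedAtFilter (𝓟 (Ico r₁ r₂)) S ∧ ∃ S₂, 0 < S₂ ∧ Tendsto S (𝓝[<] r₂) (𝓝 S₂) := by
  have hG := GF_boundedAtFilter fun j hj =>
    (deriv_gauge_boundedAtFilter_and_tendsto hr₁ hr₁₂ hsol hμmin hμ hj).1
  have hinv : (fun r : ℝ => 1 / r) ∈ boundedFilterSubalgebra ℝ (β := ℝ) (𝓟 (Ico r₁ r₂)) :=
    boundedAtFilter_Ico_of_continuousOn <| ContinuousOn.div continuousOn_const continuousOn_id
      fun r hr => (hr₁.trans_le hr.1).ne'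
  obtain ⟨c, hc⟩ := boundedAtFilter_principal_iff.1 ((hG.mul hinv).smul (2 : ℝ))
  have hr₁I : r₁ ∈ Ico r₁ r₂ := left_mem_Ico.2 hr₁₂
  have hS' := fun r hr => (hsol r hr).2.2.2.1
  obtain ⟨hS, S₂, hS₂⟩ := boundedAtFilter_and_exists_tendsto_of_abs_deriv_le_mul_abs_add hr₁₂
    ((abs_nonneg _).trans (hc r₁ hr₁I)) le_rfl hS' fun r hr => by
      rw [abs_mul, add_zero, mul_comm]
      gcongr
      simpa [mul_div_assoc, abs_div, div_eq_mul_inv, mul_assoc] using hc r hr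
  refine ⟨hS, S₂, ?_, hS₂⟩
  have hmono : MonotoneOn S (Ico r₁ r₂) := monotoneOn_Ico_of_hasDerivAt_nonneg hS' fun r hr =>
    mul_nonneg (hSpos r hr).le (div_nonneg (by linarith [GF_nonneg (N := N) (ω := ω) (r := r)])
      (hr₁.trans_le hr.1).le)
  refine (hSpos r₁ hr₁I).trans_le (ge_of_tendsto hS₂ ?_)
  filter_upwards [Ioo_mem_nhdsLT hr₁₂] with r hr
  exact hmono hr₁I (Ioo_subset_Ico_self hr) hr.1.le

end EYM

theorem regular_while_mu_positive_general (N : ℕ) (Λ : ℝ)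
    (r₁ r₂ : ℝ) (hr₁ : 0 < r₁) (hr₁₂ : r₁ < r₂)
    (m S : ℝ → ℝ) (ω : ℕ → ℝ → ℝ)
    (hSpos : ∀ r ∈ Set.Ico r₁ r₂, 0 < S r)
    (hsol : ∀ r ∈ Set.Ico r₁ r₂, EYM N Λ m S ω r)
    (μmin : ℝ) (hμmin : 0 < μmin)
    (hμ : ∀ r ∈ Set.Ico r₁ r₂, μmin ≤ muF Λ m r) :
    Bornology.IsBounded (m '' Set.Ico r₁ r₂) ∧
    Bornology.IsBounded (S '' Set.Ico r₁ r₂) ∧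
    (∀ j ∈ Finset.Icc 1 (N - 1),
      Bornology.IsBounded (ω j '' Set.Ico r₁ r₂) ∧
      Bornology.IsBounded (deriv (ω j) '' Set.Ico r₁ r₂)) ∧
    (∃ m₂ : ℝ, Tendsto m (𝓝[<] r₂) (𝓝 m₂)) ∧
    (∃ S₂ : ℝ, 0 < S₂ ∧ Tendsto S (𝓝[<] r₂) (𝓝 S₂)) ∧
    (∀ j ∈ Finset.Icc 1 (N - 1),
      (∃ a : ℝ, Tendsto (ω j) (𝓝[<] r₂) (𝓝 a)) ∧
      (∃ b : ℝ, Tendsto (deriv (ω j)) (𝓝[<] r₂) (𝓝 b))) := by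
  obtain ⟨hm, hm_lim⟩ := mass_boundedAtFilter_and_tendsto hr₁ hr₁₂ hsol hμmin hμ
  obtain ⟨hS, hS_lim⟩ := metric_boundedAtFilter_and_tendsto hr₁ hr₁₂ hSpos hsol hμmin hμ
  have hω := fun j (hj : j ∈ Finset.Icc 1 (N - 1)) =>
    gauge_boundedAtFilter_and_tendsto hr₁ hr₁₂ hsol hμmin hμ hj
  have hω' := fun j (hj : j ∈ Finset.Icc 1 (N - 1)) =>
    deriv_gauge_boundedAtFilter_and_tendsto hr₁ hr₁₂ hsol hμmin hμ hj
  exact ⟨hm.isBounded_image, hS.isBounded_image,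
    fun j hj => ⟨(hω j hj).1.isBounded_image, (hω' j hj).1.isBounded_image⟩, hm_lim, hS_lim,
    fun j hj => ⟨(hω j hj).2, (hω' j hj).2⟩⟩

/-- **Regularity as long as μ > 0.** If m, S ∈ C¹([r₁,r₂)) with S > 0, ω_j ∈ C²([r₁,r₂))
satisfy the su(N) EYM equations on [r₁,r₂), and μ ≥ μ_min > 0 there, then all field
variables (m, S, ω_j, ω_j′) are bounded on [r₁,r₂) and have finite limits as r → r₂⁻,
with lim S > 0. -/
theorem regular_while_mu_positive (N : ℕ) (hN : 2 ≤ N) (Λ : ℝ) (hΛ : Λ < 0)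
    (r₁ r₂ : ℝ) (hr₁ : 0 < r₁) (hr₁₂ : r₁ < r₂)
    (m S : ℝ → ℝ) (ω : ℕ → ℝ → ℝ)
    (hm : ContDiffOn ℝ 1 m (Set.Ico r₁ r₂))
    (hS : ContDiffOn ℝ 1 S (Set.Ico r₁ r₂))
    (hSpos : ∀ r ∈ Set.Ico r₁ r₂, 0 < S r)
    (hω : ∀ j ∈ Finset.Icc 1 (N - 1), ContDiffOn ℝ 2 (ω j) (Set.Ico r₁ r₂))
    (hsol : ∀ r ∈ Set.Ico r₁ r₂, EYM N Λ m S ω r)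
    (μmin : ℝ) (hμmin : 0 < μmin)
    (hμ : ∀ r ∈ Set.Ico r₁ r₂, μmin ≤ muF Λ m r) :
    Bornology.IsBounded (m '' Set.Ico r₁ r₂) ∧
    Bornology.IsBounded (S '' Set.Ico r₁ r₂) ∧
    (∀ j ∈ Finset.Icc 1 (N - 1),
      Bornology.IsBounded (ω j '' Set.Ico r₁ r₂) ∧
      Bornology.IsBounded (deriv (ω j) '' Set.Ico r₁ r₂)) ∧
    (∃ m₂ : ℝ, Tendsto m (𝓝[<] r₂) (𝓝 m₂)) ∧
    (∃ S₂ : ℝ, 0 < S₂ ∧ Tendsto S (𝓝[<] r₂) (𝓝 S₂)) ∧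
    (∀ j ∈ Finset.Icc 1 (N - 1),
      (∃ a : ℝ, Tendsto (ω j) (𝓝[<] r₂) (𝓝 a)) ∧
      (∃ b : ℝ, Tendsto (deriv (ω j)) (𝓝[<] r₂) (𝓝 b))) :=
  regular_while_mu_positive_general N Λ r₁ r₂ hr₁ hr₁₂ m S ω hSpos hsol μmin hμmin hμ
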